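/- Let X ⊆ ℝⁿ be a compact convex body with 0 in its interior. The set of boundary points x ∈ ∂X at which the set of supporting functionals {f ∈ X* : f(x) = 1} has affine dimension n − 1 (the maximum possible), i.e., the set of (n−1)-singular points of X, is at most countable. -/

import Mathlib

open scoped RealInnerProductSpace MeasureTheory

/-- The polar (dual) body of a set in Euclidean space, identified with a subset of the
same space via the inner product. -/
def polarBody {n : ℕ} (X : Set (EuclideanSpace ℝ (Fin n))) : Set (EuclideanSpace ℝ (Fin n)) :=
  {f | ∀ x ∈ X, ⟪f, x⟫ ≤ 1}

/-!
The exposed face `{f ∈ X* | ⟪f, x⟫ = 1}` is nonempty by Hahn–Banach, lies in the normal cone of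
`closure X` at `x`, and spans an affine hyperplane missing `0`; together with `0` it therefore spans the whole space, so
the (convex) normal cone has nonempty interior. Normal cones at distinct points `x ≠ y` of a set
have disjoint interiors: a common interior point `z` satisfies `⟪z, x⟫ = ⟪z, y⟫` on an open set,
forcing `x = y`. A separable space holds only countably many disjoint nonempty open sets.
-/

open Module Set

section AffineSpan

variable {k V : Type*} [Field k] [AddCommGroup V] [Module k V]

lemma vectorSpan_le_ker_of_forall_eq {A : Set V} {ℓ : V →ₗ[k] k} {c : k}
    (hA : ∀ a ∈ A, ℓ a = c) : vectorSpan k A ≤ LinearMap.ker ℓ := by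
  rw [vectorSpan_def, Submodule.span_le]
  rintro _ ⟨a, ha, b, hb, rfl⟩
  simp [hA a ha, hA b hb]

lemma affineSpan_eq_top_of_zero_mem_of_finrank_vectorSpan [FiniteDimensional k V]
    {A K : Set V} {ℓ : V →ₗ[k] k} (hAK : A ⊆ K) (hK : (0 : V) ∈ K) (hA : ∀ a ∈ A, ℓ a = 1)
    (hne : A.Nonempty) (hrank : finrank k V - 1 ≤ finrank k (vectorSpan k A)) :
    affineSpan k K = ⊤ := by
  obtain ⟨f, hf⟩ := hne
  have hlt : vectorSpan k A < vectorSpan k K := by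
    refine SetLike.lt_iff_le_and_exists.2 ⟨vectorSpan_mono k hAK, f, ?_, fun hfA => ?_⟩
    · simpa using vsub_mem_vectorSpan k (hAK hf) hK
    · simpa [hA f hf] using vectorSpan_le_ker_of_forall_eq hA hfA
  have hrank_lt := Submodule.finrank_lt_finrank_of_lt hlt
  rw [← AffineSubspace.direction_eq_top_iff_of_nonempty ⟨0, subset_affineSpan k K hK⟩,
    direction_affineSpan]
  exact Submodule.eq_top_of_finrank_eq (le_antisymm (Submodule.finrank_le _) (by omega))

end AffineSpan

section NormalCone

variable {E : Type*} [NormedAddCommGroup E] [InnerProductSpace ℝ E]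

def normalCone (s : Set E) (x : E) : Set E :=
  {z | ∀ w ∈ s, ⟪z, w⟫ ≤ ⟪z, x⟫}

lemma zero_mem_normalCone (s : Set E) (x : E) : (0 : E) ∈ normalCone s x := by
  simp [normalCone]

lemma convex_normalCone (s : Set E) (x : E) : Convex ℝ (normalCone s x) := by
  intro z hz z' hz' a b ha hb _ w hw
  simp only [inner_add_left, real_inner_smul_left]
  exact add_le_add (mul_le_mul_of_nonneg_left (hz w hw) ha)
    (mul_le_mul_of_nonneg_left (hz' w hw) hb)

lemma inner_eq_of_mem_normalCone {s : Set E} {x y z : E} (hx : x ∈ s) (hy : y ∈ s)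
    (hzx : z ∈ normalCone s x) (hzy : z ∈ normalCone s y) : ⟪z, x⟫ = ⟪z, y⟫ :=
  le_antisymm (hzy x hx) (hzx y hy)

lemma pairwiseDisjoint_interior_normalCone (s : Set E) :
    s.PairwiseDisjoint fun x => interior (normalCone s x) := by
  intro x hx y hy hxy
  rw [Function.onFun, Set.disjoint_iff_inter_eq_empty, ← interior_inter]
  by_contra hne
  have hker : normalCone s x ∩ normalCone s y ⊆ LinearMap.ker (innerₛₗ ℝ (x - y)) :=
    fun z ⟨hzx, hzy⟩ => by
      rw [SetLike.mem_coe, LinearMap.mem_ker, innerₛₗ_apply_apply, inner_sub_left, real_inner_comm z x, real_inner_comm z y,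
        inner_eq_of_mem_normalCone hx hy hzx hzy, sub_self]
  have htop := Submodule.eq_top_of_nonempty_interior' _
    ((Set.nonempty_iff_ne_empty.2 hne).mono (interior_mono hker))
  have hxy' : x - y ∈ LinearMap.ker (innerₛₗ ℝ (x - y)) := htop ▸ Submodule.mem_top
  exact hxy (sub_eq_zero.1 (inner_self_eq_zero.1 hxy'))

theorem countable_setOf_interior_normalCone_nonempty [TopologicalSpace.SeparableSpace E]
    (s : Set E) : {x ∈ s | (interior (normalCone s x)).Nonempty}.Countable :=
  ((pairwiseDisjoint_interior_normalCone s).subset (sep_subset _ _)).countable_of_isOpen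
    (fun _ _ => isOpen_interior) (fun _ hx => hx.2)

lemma exists_inner_eq_one_of_notMem_interior [CompleteSpace E] {X : Set E} (hX : Convex ℝ X)
    (h0 : 0 ∈ interior X) {x : E} (hx : x ∉ interior X) :
    ∃ f : E, ⟪f, x⟫ = 1 ∧ ∀ w ∈ closure X, ⟪f, w⟫ ≤ 1 := by
  obtain ⟨φ, hφ⟩ := geometric_hahn_banach_open_point hX.interior isOpen_interior hx
  have hφx : 0 < φ x := by simpa using hφ 0 h0
  have hclosure : ∀ w ∈ closure X, φ w ≤ φ x := by
    rw [← hX.closure_interior_eq_closure_of_nonempty_interior ⟨0, h0⟩]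
    exact closure_minimal (fun w hw => (hφ w hw).le) (isClosed_le φ.continuous continuous_const)
  refine ⟨(φ x)⁻¹ • (InnerProductSpace.toDual ℝ E).symm φ, ?_, fun w hw => ?_⟩
  · rw [real_inner_smul_left, InnerProductSpace.toDual_symm_apply, inv_mul_cancel₀ hφx.ne']
  · rw [real_inner_smul_left, InnerProductSpace.toDual_symm_apply, ← div_eq_inv_mul,
      div_le_one hφx]
    exact hclosure w hw

end NormalCone

lemma mem_normalCone_closure_of_mem_polarBody {n : ℕ} {X : Set (EuclideanSpace ℝ (Fin n))}
    {f x : EuclideanSpace ℝ (Fin n)} (hf : f ∈ polarBody X) (hfx : ⟪f, x⟫ = 1) :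
    f ∈ normalCone (closure X) x := fun w hw => by
  rw [hfx]
  exact closure_minimal (t := {v | ⟪f, v⟫ ≤ 1}) hf
    (isClosed_le (continuous_const.inner continuous_id) continuous_const) hw

theorem top_singular_points_countable_general {n : ℕ} (X : Set (EuclideanSpace ℝ (Fin n)))
    (hXv : Convex ℝ X) (h0 : 0 ∈ interior X) :
    {x ∈ frontier X |
      Module.finrank ℝ (affineSpan ℝ {f ∈ polarBody X | ⟪f, x⟫ = 1}).direction
        = n - 1}.Countable := by
  refine (countable_setOf_interior_normalCone_nonempty (closure X)).mono ?_
  rintro x ⟨hx, hrank⟩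
  refine ⟨frontier_subset_closure hx, ?_⟩
  obtain ⟨f, hfx, hf⟩ := exists_inner_eq_one_of_notMem_interior hXv h0 hx.2
  rw [(convex_normalCone _ _).interior_nonempty_iff_affineSpan_eq_top]
  refine affineSpan_eq_top_of_zero_mem_of_finrank_vectorSpan (ℓ := innerₛₗ ℝ x)
    (A := {f ∈ polarBody X | ⟪f, x⟫ = 1})
    (fun g hg => mem_normalCone_closure_of_mem_polarBody hg.1 hg.2) (zero_mem_normalCone _ _)
    (fun g hg => (real_inner_comm g x).trans hg.2) ⟨f, fun w hw => hf w (subset_closure hw), hfx⟩ ?_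
  rw [← direction_affineSpan, hrank, finrank_euclideanSpace_fin]

theorem top_singular_points_countable {n : ℕ} (X : Set (EuclideanSpace ℝ (Fin n)))
    (hXc : IsCompact X) (hXv : Convex ℝ X) (h0 : 0 ∈ interior X) :
    {x ∈ frontier X |
      Module.finrank ℝ (affineSpan ℝ {f ∈ polarBody X | ⟪f, x⟫ = 1}).direction
        = n - 1}.Countable :=
  top_singular_points_countable_general X hXv h0
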